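/- Every unit disk graph of a finite set of points in the plane is a clique-grid: there exists t ∈ ℕ and a function f from the vertex set to [t] × [t] such that (1) for every cell (i,j), the preimage f⁻¹(i,j) induces a clique, and (2) for every edge {u,v}, if f(u) = (i,j) and f(v) = (i',j') then |i − i'| ≤ 2 and |j − j'| ≤ 2. -/

import Mathlib

noncomputable section


/-- The unit disk graph of a finite set of points in the Euclidean plane:
two distinct points are adjacent iff their Euclidean distance is at most 2. -/
def unitDiskGraph (D : Finset (EuclideanSpace ℝ (Fin 2))) :
    SimpleGraph {p // p ∈ D} where
  Adj p q := p ≠ q ∧ dist (p : EuclideanSpace ℝ (Fin 2)) (q : EuclideanSpace ℝ (Fin 2)) ≤ 2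
  symm := by
    constructor
    intro p q h
    exact ⟨h.1.symm, by rw [dist_comm]; exact h.2⟩
  loopless := by
    constructor
    intro p h
    exact h.1 rfl

/-- A clique-grid representation: every cell preimage induces a clique, and every
edge joins vertices in cells at L∞-distance at most 2. -/
def IsCliqueGridRep {V : Type*} (G : SimpleGraph V) (t : ℕ) (f : V → Fin t × Fin t) : Prop :=
  (∀ c : Fin t × Fin t, G.IsClique {v | f v = c}) ∧
  (∀ u v, G.Adj u v →
    |((f u).1 : ℤ) - ((f v).1 : ℤ)| ≤ 2 ∧ |((f u).2 : ℤ) - ((f v).2 : ℤ)| ≤ 2)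


private lemma coord_le_dist (p q : EuclideanSpace ℝ (Fin 2)) (i : Fin 2) :
    |p i - q i| ≤ dist p q := by
  rw [EuclideanSpace.dist_eq, ← Real.sqrt_sq_eq_abs]
  apply Real.sqrt_le_sqrt
  have : (p i - q i) ^ 2 = dist (p i) (q i) ^ 2 := by
    rw [Real.dist_eq, sq_abs]
  rw [this]
  exact Finset.single_le_sum (f := fun j => dist (p j) (q j) ^ 2)
    (fun j _ => sq_nonneg _) (Finset.mem_univ i)

private lemma floor_diff_le (a b : ℝ) (h : |a - b| ≤ 2) :
    |⌊a / Real.sqrt 2⌋ - ⌊b / Real.sqrt 2⌋| ≤ 2 := by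
  have hs : (0:ℝ) < Real.sqrt 2 := by positivity
  have hs1 : (1:ℝ) ≤ Real.sqrt 2 := by
    rw [show (1:ℝ) = Real.sqrt 1 by simp]
    exact Real.sqrt_le_sqrt (by norm_num)
  have key : ∀ x y : ℝ, |x - y| ≤ 2 → ⌊x / Real.sqrt 2⌋ ≤ ⌊y / Real.sqrt 2⌋ + 2 := by
    intro x y hxy
    have hxy' : x - y ≤ 2 := (abs_le.mp hxy).2
    have hq : (x - y) / Real.sqrt 2 ≤ 2 := by
      rw [div_le_iff₀ hs]; nlinarith
    rw [sub_div] at hq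
    have h1 : x / Real.sqrt 2 ≤ y / Real.sqrt 2 + 2 := by linarith
    calc ⌊x / Real.sqrt 2⌋ ≤ ⌊y / Real.sqrt 2 + 2⌋ := Int.floor_le_floor h1
      _ = ⌊y / Real.sqrt 2⌋ + 2 := by
          rw [show (2:ℝ) = ((2:ℤ):ℝ) by norm_num, Int.floor_add_intCast]
  rw [abs_sub_le_iff]
  constructor
  · linarith [key a b h]
  · linarith [key b a (by rwa [abs_sub_comm] at h)]


private noncomputable def cellIdx (i : Fin 2) (p : EuclideanSpace ℝ (Fin 2)) : ℤ :=
  ⌊p i / Real.sqrt 2⌋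

private lemma same_cell_dist (p q : EuclideanSpace ℝ (Fin 2))
    (h0 : ⌊p 0 / Real.sqrt 2⌋ = ⌊q 0 / Real.sqrt 2⌋)
    (h1 : ⌊p 1 / Real.sqrt 2⌋ = ⌊q 1 / Real.sqrt 2⌋) : dist p q ≤ 2 := by
  have hs : (0:ℝ) < Real.sqrt 2 := by positivity
  have hsq : Real.sqrt 2 ^ 2 = 2 := Real.sq_sqrt (by norm_num)
  have key : ∀ i : Fin 2, ⌊p i / Real.sqrt 2⌋ = ⌊q i / Real.sqrt 2⌋ →
      dist (p i) (q i) ^ 2 < 2 := by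
    intro i hi
    have h1 : |p i / Real.sqrt 2 - q i / Real.sqrt 2| < 1 :=
      Int.abs_sub_lt_one_of_floor_eq_floor hi
    rw [← sub_div, abs_div, abs_of_pos hs, div_lt_one hs] at h1
    rw [Real.dist_eq, sq_abs]
    nlinarith [abs_nonneg (p i - q i), sq_abs (p i - q i)]
  have k0 := key 0 h0
  have k1 := key 1 h1
  rw [EuclideanSpace.dist_eq, Fin.sum_univ_two]
  rw [show (2:ℝ) = Real.sqrt 4 by
    rw [show (4:ℝ) = 2^2 by norm_num, Real.sqrt_sq (by norm_num)]]
  exact Real.sqrt_le_sqrt (by linarith)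

/-- every unit disk graph is a clique-grid. -/
theorem unitDiskGraph_isCliqueGrid (D : Finset (EuclideanSpace ℝ (Fin 2))) :
    ∃ (t : ℕ) (f : {p // p ∈ D} → Fin t × Fin t),
      IsCliqueGridRep (unitDiskGraph D) t f := by
  rcases D.eq_empty_or_nonempty with rfl | hD
  · refine ⟨0, fun p => absurd p.2 (Finset.notMem_empty _), ?_, ?_⟩
    · intro c; exact absurd c.1.2 (Nat.not_lt_zero _)
    · intro u; exact absurd u.2 (Finset.notMem_empty _)
  · have hne0 : (D.image (cellIdx 0)).Nonempty := hD.image _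
    have hne1 : (D.image (cellIdx 1)).Nonempty := hD.image _
    set m0 := (D.image (cellIdx 0)).min' hne0 with hm0
    set M0 := (D.image (cellIdx 0)).max' hne0 with hM0
    set m1 := (D.image (cellIdx 1)).min' hne1 with hm1
    set M1 := (D.image (cellIdx 1)).max' hne1 with hM1
    set t : ℕ := (M0 - m0).toNat + (M1 - m1).toNat + 1 with ht
    have hb0 : ∀ p : {p // p ∈ D}, (cellIdx 0 p - m0).toNat < t := by
      intro p
      have h1 := Finset.le_max' _ _ (Finset.mem_image_of_mem (cellIdx 0) p.2)
      omega
    have hb1 : ∀ p : {p // p ∈ D}, (cellIdx 1 p - m1).toNat < t := by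
      intro p
      have h1 := Finset.le_max' _ _ (Finset.mem_image_of_mem (cellIdx 1) p.2)
      omega
    have hlb0 : ∀ p : {p // p ∈ D}, m0 ≤ cellIdx 0 p :=
      fun p => Finset.min'_le _ _ (Finset.mem_image_of_mem _ p.2)
    have hlb1 : ∀ p : {p // p ∈ D}, m1 ≤ cellIdx 1 p :=
      fun p => Finset.min'_le _ _ (Finset.mem_image_of_mem _ p.2)
    refine ⟨t, fun p => (⟨(cellIdx 0 p - m0).toNat, hb0 p⟩,
      ⟨(cellIdx 1 p - m1).toNat, hb1 p⟩), ?_, ?_⟩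
    · intro c u hu v hv huv
      simp only [Set.mem_setOf_eq] at hu hv
      have h := hu.trans hv.symm
      rw [Prod.ext_iff, Fin.ext_iff, Fin.ext_iff] at h
      simp only [Fin.val_mk] at h
      have e0 : cellIdx 0 (u : EuclideanSpace ℝ (Fin 2)) = cellIdx 0 (v : EuclideanSpace ℝ (Fin 2)) := by
        have h1 := hlb0 u; have h2 := hlb0 v; omega
      have e1 : cellIdx 1 (u : EuclideanSpace ℝ (Fin 2)) = cellIdx 1 (v : EuclideanSpace ℝ (Fin 2)) := by
        have h1 := hlb1 u; have h2 := hlb1 v; omega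
      exact ⟨huv, same_cell_dist _ _ e0 e1⟩
    · intro u v huv
      obtain ⟨-, hd⟩ := huv
      have h0 : |(u : EuclideanSpace ℝ (Fin 2)) 0 - (v : EuclideanSpace ℝ (Fin 2)) 0| ≤ 2 :=
        (coord_le_dist _ _ 0).trans hd
      have h1 : |(u : EuclideanSpace ℝ (Fin 2)) 1 - (v : EuclideanSpace ℝ (Fin 2)) 1| ≤ 2 :=
        (coord_le_dist _ _ 1).trans hd
      have f0 := floor_diff_le _ _ h0
      have f1 := floor_diff_le _ _ h1
      have hu0 := hlb0 u; have hv0 := hlb0 v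
      have hu1 := hlb1 u; have hv1 := hlb1 v
      rw [abs_le] at f0 f1
      unfold cellIdx at hu0 hv0 hu1 hv1
      constructor
      · simp only [Fin.val_mk]
        unfold cellIdx
        rw [abs_le]
        omega
      · simp only [Fin.val_mk]
        unfold cellIdx
        rw [abs_le]
        omega
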